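/- arXiv:1307.1871 — 6 statements merged into one kernel-verified Lean document; each statement's English description precedes it below -/
import Mathlib

section
/- The set-valued map F : ℝ ⇉ ℝ defined by F(t) = [-1, 0] for t < 0 and F(t) = [-1, 1] for t ≥ 0 has convex compact values, satisfies the WCM condition (for all s, t ∈ ℝ and v ∈ F(s) there exists w ∈ F(t) with (s - t)(v - w) ≥ 0), but is not monotone, i.e., there exist s, t ∈ ℝ, v ∈ F(s), w ∈ F(t) with (s - t)(v - w) < 0. -/
theorem example_convex_wcm_not_monotone :
    ∀ F : ℝ → Set ℝ, (F = fun t => if t < 0 then Set.Icc (-1) 0 else Set.Icc (-1) 1) →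
    (∀ t, Convex ℝ (F t)) ∧ (∀ t, IsCompact (F t)) ∧
    (∀ s t : ℝ, ∀ v ∈ F s, ∃ w ∈ F t, 0 ≤ (s - t) * (v - w)) ∧
    (∃ s t : ℝ, ∃ v ∈ F s, ∃ w ∈ F t, (s - t) * (v - w) < 0) := by
  intro F hF
  subst hF
  refine ⟨?_, ?_, ?_, ?_⟩
  · intro t; dsimp only; split_ifs <;> exact convex_Icc _ _
  · intro t; dsimp only; split_ifs <;> exact isCompact_Icc
  · intro s t v hv
    simp only [Set.mem_Icc] at hv ⊢
    rcases le_or_gt t s with h | h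
    · refine ⟨-1, ?_, ?_⟩
      · split_ifs <;> constructor <;> norm_num
      · split_ifs at hv <;> nlinarith [hv.1]
    · by_cases ht : t < 0
      · have hs : s < 0 := lt_trans h ht
        refine ⟨0, ?_, ?_⟩
        · simp [ht]
        · simp only [if_pos hs] at hv; nlinarith [hv.2]
      · refine ⟨1, ?_, ?_⟩
        · simp [ht]
        · split_ifs at hv <;> nlinarith [hv.2]
  · refine ⟨-1, 0, 0, ?_, -1, ?_, ?_⟩
    · norm_num
    · norm_num
    · norm_num
end

section
/- The set-valued map F : ℝ ⇉ ℝ defined by F(t) = {t, t^{1/3}} (where t^{1/3} denotes the real cube root of t) has compact values, satisfies the WCM condition, but is not monotone. -/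
/-- The real cube root: the unique real number whose cube is `t`,
equal to `sign t * |t| ^ (1/3)`. -/
noncomputable def cbrt (t : ℝ) : ℝ := Real.sign t * |t| ^ ((1:ℝ)/3)

lemma cbrt_cube (t : ℝ) : cbrt t ^ 3 = t := by
  unfold cbrt
  have habs : (|t| ^ ((1:ℝ)/3)) ^ (3:ℕ) = |t| := by
    rw [← Real.rpow_natCast (|t| ^ ((1:ℝ)/3)) 3, ← Real.rpow_mul (abs_nonneg t)]
    norm_num
  rw [mul_pow, habs]
  have hs : Real.sign t ^ 3 = Real.sign t := by
    rcases Real.sign_apply_eq t with h | h | h <;> rw [h] <;> norm_num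
  rw [hs]
  rcases lt_trichotomy t 0 with h | h | h
  · rw [Real.sign_of_neg h, abs_of_neg (by linarith)]; ring
  · simp [h]
  · rw [Real.sign_of_pos h, abs_of_pos h]; ring

lemma cube_le (a b : ℝ) (h : a ^ 3 ≤ b ^ 3) : a ≤ b := by
  by_contra hab
  push_neg at hab
  exact absurd h (not_le.2 ((Odd.strictMono_pow (by decide : Odd 3)) hab))

lemma cbrt_mono {s t : ℝ} (h : s ≤ t) : cbrt s ≤ cbrt t := by
  apply cube_le
  rw [cbrt_cube, cbrt_cube]; exact h

lemma cbrt_27inv : cbrt (1/27) = 1/3 := by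
  have h1 : cbrt (1/27) ^ 3 = (1/27 : ℝ) := cbrt_cube _
  have h2 : ((1:ℝ)/3) ^ 3 = (1/27 : ℝ) := by norm_num
  have := cube_le (cbrt (1/27)) (1/3) (by rw [h1, h2])
  have := cube_le (1/3) (cbrt (1/27)) (by rw [h1, h2])
  linarith

theorem example_F_compact_wcm_not_monotone :
    ∀ F : ℝ → Set ℝ, (F = fun t => ({t, cbrt t} : Set ℝ)) →
    (∀ t, IsCompact (F t)) ∧
    (∀ s t : ℝ, ∀ v ∈ F s, ∃ w ∈ F t, 0 ≤ (s - t) * (v - w)) ∧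
    (∃ s t : ℝ, ∃ v ∈ F s, ∃ w ∈ F t, (s - t) * (v - w) < 0) := by
  intro F hF
  subst hF
  refine ⟨fun t => ((Set.finite_singleton _).insert _).isCompact, ?_, ?_⟩
  · intro s t v hv
    simp only [Set.mem_insert_iff, Set.mem_singleton_iff] at hv
    rcases hv with hv | hv
    · refine ⟨t, Or.inl rfl, ?_⟩
      rw [hv]
      nlinarith [sq_nonneg (s - t)]
    · refine ⟨cbrt t, Or.inr rfl, ?_⟩
      subst hv
      rcases le_total s t with h | h
      · have := cbrt_mono h
        nlinarith
      · have := cbrt_mono h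
        nlinarith
  · refine ⟨1/8, 1/27, 1/8, Or.inl rfl, cbrt (1/27), Or.inr rfl, ?_⟩
    rw [cbrt_27inv]
    norm_num
end

section
/- The set-valued map F : ℝ² ⇉ ℝ² defined by F(x) = ({x_1^{1/3}} + [-1, 0]) × ([-2,-1] ∪ [1,2]) if x_1 < 0 and F(x) = ({x_1^{1/3}} + [-1, 1]) × ([-2,-1] ∪ [1,2]) if x_1 ≥ 0 has compact values and satisfies the Weak Componentwise Monotonicity condition, but is not monotone (there exist x, y ∈ ℝ², v ∈ F(x), w ∈ F(y) with ⟨x - y, v - w⟩ < 0). -/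
/-!
`F` is a product of one-variable maps: `x₁ ↦ [cbrt x₁ - 1, cbrt x₁ + 𝟙(x₁ ≥ 0)]` and the constant
compact set `[-2, -1] ∪ [1, 2]`, so the WCM condition reduces to its one-dimensional version,
coordinate by coordinate. An interval-valued map with monotone endpoints satisfies it: moving
left, take the left endpoint of the new interval; moving right, the right one. Monotonicity fails
because the values have width: `x = (1, 0)`, `y = 0`, `v = (0, 1)`, `w = (1, 1)` give
`⟨x - y, v - w⟩ = -1`.
-/

open Pointwise
open Set

def ScalarWCM {R : Type*} [Ring R] [LinearOrder R] (G : R → Set R) : Prop :=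
  ∀ s t, ∀ a ∈ G s, ∃ b ∈ G t, 0 ≤ (s - t) * (a - b)

theorem scalarWCM_const {R : Type*} [Ring R] [LinearOrder R] (S : Set R) :
    ScalarWCM fun _ : R => S :=
  fun _ _ a ha => ⟨a, ha, by simp⟩

theorem scalarWCM_Icc {R : Type*} [Ring R] [LinearOrder R] [IsStrictOrderedRing R]
    {lo hi : R → R} (hlo : Monotone lo) (hhi : Monotone hi) (hle : ∀ t, lo t ≤ hi t) :
    ScalarWCM fun t => Icc (lo t) (hi t) := by
  intro s t a ⟨hlo_a, ha_hi⟩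
  rcases le_total t s with hts | hst
  · exact ⟨lo t, ⟨le_rfl, hle t⟩,
      mul_nonneg (sub_nonneg.2 hts) (sub_nonneg.2 ((hlo hts).trans hlo_a))⟩
  · exact ⟨hi t, ⟨hle t, le_rfl⟩,
      mul_nonneg_of_nonpos_of_nonpos (sub_nonpos.2 hst) (sub_nonpos.2 (ha_hi.trans (hhi hst)))⟩

theorem exists_forall_mem_forall_mul_sub_nonneg {ι : Type*} {G : ι → ℝ → Set ℝ}
    (hG : ∀ i, ScalarWCM (G i)) (x y : EuclideanSpace ℝ ι) {v : EuclideanSpace ℝ ι}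
    (hv : ∀ i, v i ∈ G i (x i)) :
    ∃ w : EuclideanSpace ℝ ι, (∀ i, w i ∈ G i (y i)) ∧ ∀ i, 0 ≤ (x i - y i) * (v i - w i) := by
  choose w hw using fun i => hG i (x i) (y i) (v i) (hv i)
  exact ⟨WithLp.toLp 2 w, fun i => (hw i).1, fun i => (hw i).2⟩

theorem isCompact_setOf_forall_mem {ι : Type*} {S : ι → Set ℝ} (hS : ∀ i, IsCompact (S i)) :
    IsCompact {v : EuclideanSpace ℝ ι | ∀ i, v i ∈ S i} := by
  convert (PiLp.homeomorph 2 fun _ : ι => ℝ).isCompact_preimage.2 (isCompact_univ_pi hS) using 1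
  ext v
  simp [PiLp.homeomorph]

theorem cbrt_of_nonneg {t : ℝ} (h : 0 ≤ t) : cbrt t = t ^ ((1 : ℝ) / 3) := by
  rcases h.eq_or_lt with rfl | h
  · simp [cbrt]
  · rw [cbrt, Real.sign_of_pos h, abs_of_pos h, one_mul]

theorem cbrt_of_neg {t : ℝ} (h : t < 0) : cbrt t = -(-t) ^ ((1 : ℝ) / 3) := by
  rw [cbrt, Real.sign_of_neg h, abs_of_neg h, neg_one_mul]

theorem cbrt_monotone : Monotone cbrt := by
  intro a b hab
  have rpow_mono : ∀ {s t : ℝ}, 0 ≤ s → s ≤ t → s ^ ((1 : ℝ) / 3) ≤ t ^ ((1 : ℝ) / 3) :=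
    fun hs hst => Real.rpow_le_rpow hs hst (by norm_num)
  rcases le_or_gt 0 a with ha | ha
  · rw [cbrt_of_nonneg ha, cbrt_of_nonneg (ha.trans hab)]
    exact rpow_mono ha hab
  rcases le_or_gt 0 b with hb | hb
  · rw [cbrt_of_neg ha, cbrt_of_nonneg hb]
    linarith [Real.rpow_nonneg (neg_nonneg.2 ha.le) ((1 : ℝ) / 3), Real.rpow_nonneg hb ((1 : ℝ) / 3)]
  · rw [cbrt_of_neg ha, cbrt_of_neg hb, neg_le_neg_iff]
    exact rpow_mono (by linarith) (by linarith)

noncomputable def cbrtInterval (t : ℝ) : Set ℝ :=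
  Icc (cbrt t - 1) (cbrt t + if t < 0 then 0 else 1)

theorem singleton_cbrt_add_eq_cbrtInterval (t : ℝ) :
    ({cbrt t} : Set ℝ) + (if t < 0 then Icc (-1) 0 else Icc (-1) 1) = cbrtInterval t := by
  rw [cbrtInterval]
  split_ifs <;> simp only [Set.singleton_add, image_const_add_Icc, add_zero, sub_eq_add_neg]

theorem scalarWCM_cbrtInterval : ScalarWCM cbrtInterval := by
  have step_mono : Monotone fun t : ℝ => if t < 0 then (0 : ℝ) else 1 := by
    intro a b hab
    dsimp only
    split_ifs <;> linarith
  refine scalarWCM_Icc (cbrt_monotone.add_const _) (cbrt_monotone.add step_mono) fun t => ?_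
  split_ifs <;> linarith

theorem example_2d_compact_wcm_not_monotone :
    ∀ F : EuclideanSpace ℝ (Fin 2) → Set (EuclideanSpace ℝ (Fin 2)),
    (F = fun x => {v | v 0 ∈ (({cbrt (x 0)} : Set ℝ) +
                      (if x 0 < 0 then Set.Icc (-1:ℝ) 0 else Set.Icc (-1:ℝ) 1) : Set ℝ)
                    ∧ v 1 ∈ Set.Icc (-2:ℝ) (-1) ∪ Set.Icc (1:ℝ) 2}) →
    (∀ x, IsCompact (F x)) ∧
    (∀ x y, ∀ v ∈ F x, ∃ w ∈ F y, ∀ j : Fin 2, 0 ≤ (x j - y j) * (v j - w j)) ∧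
    (∃ x y, ∃ v ∈ F x, ∃ w ∈ F y, (inner ℝ (x - y) (v - w) : ℝ) < 0) := by
  intro F hF
  let G : Fin 2 → ℝ → Set ℝ := ![cbrtInterval, fun _ => Icc (-2) (-1) ∪ Icc 1 2]
  have hFG : ∀ x, F x = {v | ∀ i, v i ∈ G i (x i)} := fun x => by
    simp only [hF, singleton_cbrt_add_eq_cbrtInterval, Fin.forall_fin_two]
    rfl
  have hG_wcm : ∀ i, ScalarWCM (G i) := by
    intro i
    fin_cases i
    exacts [scalarWCM_cbrtInterval, scalarWCM_const _]
  have hG_compact : ∀ i t, IsCompact (G i t) := by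
    intro i t
    fin_cases i
    exacts [isCompact_Icc, isCompact_Icc.union isCompact_Icc]
  refine ⟨fun x => hFG x ▸ isCompact_setOf_forall_mem fun i => hG_compact i (x i),
    fun x y v hv => ?_, ⟨!₂[1, 0], 0, !₂[0, 1], ?_, !₂[1, 1], ?_, ?_⟩⟩
  · rw [hFG] at hv
    obtain ⟨w, hw, hvw⟩ := exists_forall_mem_forall_mul_sub_nonneg hG_wcm x y hv
    exact ⟨w, hFG y ▸ hw, hvw⟩
  all_goals norm_num [hFG, G, cbrtInterval, Fin.forall_fin_two, cbrt_of_nonneg,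
    PiLp.inner_apply, Fin.sum_univ_two]
end

section
/- Let f : ℝ ⇉ ℝ be defined by f(s) = {sign(s)} for s ≠ 0 and f(0) = {-1, 1}, and define F : ℝ^n ⇉ ℝ^n by F(x) = { (1/2)·(f(x_1), ..., f(x_n)), (f(x_1), ..., f(x_n)) }, i.e., F(x) = { c·u : c ∈ {1/2, 1}, u_j ∈ f(x_j) for all j }. Then F has compact nonempty values, satisfies the Weak Componentwise Monotonicity condition, and is not monotone. -/
/-- `f s = {sign s}` for `s ≠ 0`, and `f 0 = {-1, 1}`. -/
noncomputable def signSet (s : ℝ) : Set ℝ := if s = 0 then {-1, 1} else {Real.sign s}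

/-! `signSet` is monotone in the weak sense that, for `s ≤ t`, every element of
`signSet s` lies below some element of `signSet t` (and symmetrically), which gives the weak
componentwise condition coordinate by coordinate, uniformly in the common scale `c ≥ 0`.
Monotonicity fails because the scale may differ between `x` and `y`: with the same sign vector `u`
at both points, `⟨x - y, (1/2) • u - u⟩ = -(1/2) ⟨x - y, u⟩ < 0` once `⟨x - y, u⟩ > 0`. -/

lemma mem_signSet_iff {s b : ℝ} : b ∈ signSet s ↔ b = 1 ∧ 0 ≤ s ∨ b = -1 ∧ s ≤ 0 := by
  rcases lt_trichotomy s 0 with h | rfl | h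
  · simp [signSet, h.ne, h.le, h.not_ge, Real.sign_of_neg h]
  · simp [signSet, or_comm]
  · simp [signSet, h.ne', h.le, h.not_ge, Real.sign_of_pos h]

lemma signSet_finite (s : ℝ) : (signSet s).Finite := by
  unfold signSet; split <;> simp

lemma one_mem_signSet {s : ℝ} (hs : 0 ≤ s) : 1 ∈ signSet s :=
  mem_signSet_iff.2 (Or.inl ⟨rfl, hs⟩)

lemma signSet_nonempty (s : ℝ) : (signSet s).Nonempty := by
  rcases le_total 0 s with hs | hs
  · exact ⟨1, one_mem_signSet hs⟩
  · exact ⟨-1, mem_signSet_iff.2 (Or.inr ⟨rfl, hs⟩)⟩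

lemma exists_mem_signSet_ge {s t a : ℝ} (hst : s ≤ t) (ha : a ∈ signSet s) :
    ∃ b ∈ signSet t, a ≤ b := by
  rcases le_or_gt 0 t with ht | ht
  · refine ⟨1, one_mem_signSet ht, ?_⟩
    rcases mem_signSet_iff.1 ha with ⟨rfl, -⟩ | ⟨rfl, -⟩ <;> norm_num
  · refine ⟨-1, mem_signSet_iff.2 (Or.inr ⟨rfl, ht.le⟩), ?_⟩
    rcases mem_signSet_iff.1 ha with ⟨-, hs⟩ | ⟨rfl, -⟩
    · linarith
    · rfl

lemma exists_mem_signSet_le {s t a : ℝ} (hts : t ≤ s) (ha : a ∈ signSet s) :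
    ∃ b ∈ signSet t, b ≤ a := by
  rcases le_or_gt t 0 with ht | ht
  · refine ⟨-1, mem_signSet_iff.2 (Or.inr ⟨rfl, ht⟩), ?_⟩
    rcases mem_signSet_iff.1 ha with ⟨rfl, -⟩ | ⟨rfl, -⟩ <;> norm_num
  · refine ⟨1, one_mem_signSet ht.le, ?_⟩
    rcases mem_signSet_iff.1 ha with ⟨rfl, -⟩ | ⟨-, hs⟩
    · rfl
    · linarith

lemma exists_mem_signSet_mul_sub_nonneg (s t : ℝ) {a : ℝ} (ha : a ∈ signSet s) :
    ∃ b ∈ signSet t, 0 ≤ (s - t) * (a - b) := by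
  rcases le_total s t with hst | hts
  · obtain ⟨b, hb, hab⟩ := exists_mem_signSet_ge hst ha
    exact ⟨b, hb, mul_nonneg_of_nonpos_of_nonpos (by linarith) (by linarith)⟩
  · obtain ⟨b, hb, hba⟩ := exists_mem_signSet_le hts ha
    exact ⟨b, hb, mul_nonneg (by linarith) (by linarith)⟩

section ScaledProduct

variable {ι : Type*}

def scaledProduct (C : Set ℝ) (f : ℝ → Set ℝ) (x : EuclideanSpace ℝ ι) :
    Set (EuclideanSpace ℝ ι) :=
  {v | ∃ c ∈ C, ∃ u : EuclideanSpace ℝ ι, (∀ j, u j ∈ f (x j)) ∧ v = c • u}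

variable {C : Set ℝ} {f : ℝ → Set ℝ}

lemma scaledProduct_nonempty (hC : C.Nonempty) (hf : ∀ s, (f s).Nonempty)
    (x : EuclideanSpace ℝ ι) : (scaledProduct C f x).Nonempty := by
  choose g hg using hf
  obtain ⟨c, hc⟩ := hC
  exact ⟨_, c, hc, WithLp.toLp 2 fun j => g (x j), fun j => hg (x j), rfl⟩

lemma scaledProduct_finite [Finite ι] (hC : C.Finite) (hf : ∀ s, (f s).Finite)
    (x : EuclideanSpace ℝ ι) : (scaledProduct C f x).Finite := by
  have hpi : (Set.univ.pi fun j => f (x j)).Finite := Set.Finite.pi fun j => hf (x j)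
  refine ((hC.prod hpi).image fun p => p.1 • WithLp.toLp 2 p.2).subset ?_
  rintro _ ⟨c, hc, u, hu, rfl⟩
  exact ⟨(c, u.ofLp), ⟨hc, fun j _ => hu j⟩, rfl⟩

lemma scaledProduct_wcm (hC : ∀ c ∈ C, 0 ≤ c)
    (hf : ∀ s t, ∀ a ∈ f s, ∃ b ∈ f t, 0 ≤ (s - t) * (a - b))
    (x y : EuclideanSpace ℝ ι) :
    ∀ v ∈ scaledProduct C f x, ∃ w ∈ scaledProduct C f y,
      ∀ j, 0 ≤ (x j - y j) * (v j - w j) := by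
  rintro _ ⟨c, hc, u, hu, rfl⟩
  choose g hg hgu using fun j => hf (x j) (y j) (u j) (hu j)
  refine ⟨c • WithLp.toLp 2 g, ⟨c, hc, _, hg, rfl⟩, fun j => ?_⟩
  calc 0 ≤ c * ((x j - y j) * (u j - g j)) := mul_nonneg (hC c hc) (hgu j)
    _ = (x j - y j) * ((c • u) j - (c • WithLp.toLp 2 g) j) := by simp; ring

lemma exists_inner_scaledProduct_neg [Fintype ι] {c c' : ℝ} (hc : c ∈ C) (hc' : c' ∈ C) (hlt : c < c')
    {x y u : EuclideanSpace ℝ ι} (hux : ∀ j, u j ∈ f (x j)) (huy : ∀ j, u j ∈ f (y j))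
    (hpos : 0 < inner ℝ (x - y) u) :
    ∃ v ∈ scaledProduct C f x, ∃ w ∈ scaledProduct C f y, inner ℝ (x - y) (v - w) < 0 := by
  refine ⟨c • u, ⟨c, hc, u, hux, rfl⟩, c' • u, ⟨c', hc', u, huy, rfl⟩, ?_⟩
  rw [← sub_smul, inner_smul_right]
  exact mul_neg_of_neg_of_pos (sub_neg.2 hlt) hpos

end ScaledProduct

theorem example_multidim_compact_wcm_not_monotone (n : ℕ) (hn : 1 ≤ n) :
    ∀ F : EuclideanSpace ℝ (Fin n) → Set (EuclideanSpace ℝ (Fin n)),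
    (F = fun x => {v | ∃ c ∈ ({1/2, 1} : Set ℝ), ∃ u : EuclideanSpace ℝ (Fin n),
                      (∀ j, u j ∈ signSet (x j)) ∧ v = c • u}) →
    (∀ x, (F x).Nonempty ∧ IsCompact (F x)) ∧
    (∀ x y, ∀ v ∈ F x, ∃ w ∈ F y, ∀ j : Fin n, 0 ≤ (x j - y j) * (v j - w j)) ∧
    (∃ x y, ∃ v ∈ F x, ∃ w ∈ F y, (inner ℝ (x - y) (v - w) : ℝ) < 0) := by
  rintro F rfl
  have hC : ({1/2, 1} : Set ℝ).Finite := (Set.finite_singleton 1).insert _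
  refine ⟨fun x => ⟨scaledProduct_nonempty (Set.insert_nonempty _ _) signSet_nonempty x,
      (scaledProduct_finite hC signSet_finite x).isCompact⟩,
    fun x y => scaledProduct_wcm (by norm_num)
      (fun s t _ => exists_mem_signSet_mul_sub_nonneg s t) x y,
    ?_⟩
  let i₀ : Fin n := ⟨0, hn⟩
  let u : EuclideanSpace ℝ (Fin n) := WithLp.toLp 2 fun _ => 1
  refine ⟨EuclideanSpace.single i₀ 1, 0,
    exists_inner_scaledProduct_neg (C := {1/2, 1}) (f := signSet) (u := u)
      (by norm_num) (by norm_num) (by norm_num : (1/2 : ℝ) < 1) ?_ ?_ ?_⟩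
  · exact fun j => one_mem_signSet (by simp only [PiLp.single_apply]; split_ifs <;> norm_num)
  · exact fun j => one_mem_signSet le_rfl
  · simp [u, EuclideanSpace.inner_single_left]
end

section
/- Let a sequence of real numbers v_0, v_1, ..., v_{N-1} and points ξ_0, ξ_1, ..., ξ_N with ξ_{i+1} = ξ_i + h·v_i (h > 0 fixed) satisfy the selection property: for each i ≥ 1, (ξ_i - ξ_{i-1})(v_i - v_{i-1}) ≥ 0. If k is the first index with v_k ≠ 0 and v_k > 0, then v_i ≥ v_k > 0 for all i ≥ k and the sequence (v_i)_{i ≥ k} is nondecreasing; consequently (ξ_i) is nondecreasing. Symmetrically, if v_k < 0 then (v_i)_{i ≥ k} is nonincreasing with v_i ≤ v_k < 0 and (ξ_i) is nonincreasing. -/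
theorem euler_velocities_monotone
    (N k : ℕ) (h : ℝ) (hh : 0 < h) (v ξ : ℕ → ℝ)
    (hstep : ∀ i < N, ξ (i + 1) = ξ i + h * v i)
    (hsel : ∀ i, 1 ≤ i → i ≤ N - 1 → 0 ≤ (ξ i - ξ (i - 1)) * (v i - v (i - 1)))
    (hk : k < N) (hfirst : ∀ i < k, v i = 0) (hknz : v k ≠ 0) :
    (0 < v k →
      (∀ i, k ≤ i → i < N → v k ≤ v i) ∧
      (∀ i j, k ≤ i → i ≤ j → j < N → v i ≤ v j) ∧
      (∀ i j, i ≤ j → j ≤ N → ξ i ≤ ξ j)) ∧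
    (v k < 0 →
      (∀ i, k ≤ i → i < N → v i ≤ v k) ∧
      (∀ i j, k ≤ i → i ≤ j → j < N → v j ≤ v i) ∧
      (∀ i j, i ≤ j → j ≤ N → ξ j ≤ ξ i)) := by
  -- adjacent selection inequality in terms of velocities
  have hadj : ∀ i, i + 1 < N → 0 ≤ v i * (v (i + 1) - v i) := by
    intro i hi
    have h1 := hsel (i + 1) (by omega) (by omega)
    have h2 := hstep i (by omega)
    simp only [Nat.add_sub_cancel] at h1
    rw [h2] at h1
    have : 0 ≤ h * (v i * (v (i + 1) - v i)) := by ring_nf at h1 ⊢; linarith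
    nlinarith
  constructor
  · intro hpos
    have hlb : ∀ i, k ≤ i → i < N → v k ≤ v i := by
      intro i
      induction i with
      | zero =>
        intro h1 _
        have hk0 : k = 0 := Nat.le_zero.mp h1
        rw [hk0]
      | succ n ih =>
        intro h1 h2
        rcases Nat.lt_or_ge n k with hc | hc
        · have : k = n + 1 := by omega
          simp [this]
        · have hvn := ih hc (by omega)
          have := hadj n (by omega)
          nlinarith
    have hstep' : ∀ i, k ≤ i → i + 1 < N → v i ≤ v (i + 1) := by
      intro i h1 h2
      have hvn := hlb i h1 (by omega)
      have := hadj i h2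
      nlinarith
    have hmono : ∀ i j, k ≤ i → i ≤ j → j < N → v i ≤ v j := by
      intro i j hki
      induction j with
      | zero =>
        intro h1 _
        have hi0 : i = 0 := Nat.le_zero.mp h1
        rw [hi0]
      | succ n ih =>
        intro h1 h2
        rcases Nat.lt_or_ge n i with hc | hc
        · have : i = n + 1 := by omega
          simp [this]
        · exact le_trans (ih hc (by omega)) (hstep' n (by omega) (by omega))
    refine ⟨hlb, hmono, ?_⟩
    have hξ : ∀ i, i < N → ξ i ≤ ξ (i + 1) := by
      intro i hi
      rw [hstep i hi]
      rcases Nat.lt_or_ge i k with hc | hc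
      · simp [hfirst i hc]
      · have := hlb i hc hi
        nlinarith
    intro i j hij
    induction j with
    | zero =>
      intro _
      have hi0 : i = 0 := Nat.le_zero.mp hij
      rw [hi0]
    | succ n ih =>
      intro h2
      rcases Nat.lt_or_ge n i with hc | hc
      · have : i = n + 1 := by omega
        simp [this]
      · exact le_trans (ih hc (by omega)) (hξ n (by omega))
  · intro hneg
    have hlb : ∀ i, k ≤ i → i < N → v i ≤ v k := by
      intro i
      induction i with
      | zero =>
        intro h1 _
        have hk0 : k = 0 := Nat.le_zero.mp h1
        rw [hk0]
      | succ n ih =>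
        intro h1 h2
        rcases Nat.lt_or_ge n k with hc | hc
        · have : k = n + 1 := by omega
          simp [this]
        · have hvn := ih hc (by omega)
          have := hadj n (by omega)
          nlinarith
    have hstep' : ∀ i, k ≤ i → i + 1 < N → v (i + 1) ≤ v i := by
      intro i h1 h2
      have hvn := hlb i h1 (by omega)
      have := hadj i h2
      nlinarith
    have hmono : ∀ i j, k ≤ i → i ≤ j → j < N → v j ≤ v i := by
      intro i j hki
      induction j with
      | zero =>
        intro h1 _
        have hi0 : i = 0 := Nat.le_zero.mp h1
        rw [hi0]
      | succ n ih =>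
        intro h1 h2
        rcases Nat.lt_or_ge n i with hc | hc
        · have : i = n + 1 := by omega
          simp [this]
        · exact le_trans (hstep' n (by omega) (by omega)) (ih hc (by omega))
    refine ⟨hlb, hmono, ?_⟩
    have hξ : ∀ i, i < N → ξ (i + 1) ≤ ξ i := by
      intro i hi
      rw [hstep i hi]
      rcases Nat.lt_or_ge i k with hc | hc
      · simp [hfirst i hc]
      · have := hlb i hc hi
        nlinarith
    intro i j hij
    induction j with
    | zero =>
      intro _
      have hi0 : i = 0 := Nat.le_zero.mp hij
      rw [hi0]
    | succ n ih =>
      intro h2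
      rcases Nat.lt_or_ge n i with hc | hc
      · have : i = n + 1 := by omega
        simp [this]
      · exact le_trans (hξ n (by omega)) (ih hc (by omega))
end

section
/- Let F : ℝ^n ⇉ ℝ^n have nonempty compact values and closed graph, satisfy the linear growth condition ‖F(x)‖ ≤ A + B|x|, and satisfy the Weak Componentwise Monotonicity condition. Then for every x_0 ∈ ℝ^n and T > 0 the differential inclusion ẋ(t) ∈ F(x(t)), x(0) = x_0, has a solution on [0, T], i.e., there exists a Lipschitz function x : [0, T] → ℝ^n with x(0) = x_0 and ẋ(t) ∈ F(x(t)) for almost every t ∈ [0, T]. Moreover, a solution exists with each coordinate x_j monotone on [0, T]. -/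
/-!
Run the explicit Euler scheme with step `h = T / (N + 1)`, choosing each new velocity by weak
componentwise monotonicity from the previous one at the new node. Since consecutive nodes differ by
`h • V k`, this gives `V k j * V k j ≤ V k j * V (k + 1) j`: every velocity coordinate keeps a
fixed sign and moves away from zero. The step-function velocities are therefore, coordinatewise,
signed monotone functions, bounded uniformly in `N` by the discrete Grönwall inequality. Helly's
selection theorem extracts a subsequence converging almost everywhere to some `g` whose
coordinates are again signed monotone; `x = x₀ + ∫ g` is Lipschitz, coordinatewise monotone,
differentiable a.e. with `x' = g` by Lebesgue differentiation, and closedness of the graph gives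
`g t ∈ F (x t)` in the limit.
-/

open MeasureTheory Filter Set Topology

def SignedMonotone {α : Type*} [Preorder α] (f : α → ℝ) : Prop :=
  ∃ s : SignType, s ≠ 0 ∧ Monotone (fun x => s * f x) ∧ ∀ x, 0 ≤ s * f x

lemma SignedMonotone.comp_monotone {α β : Type*} [Preorder α] [Preorder β] {f : β → ℝ}
    (hf : SignedMonotone f) {g : α → β} (hg : Monotone g) : SignedMonotone (f ∘ g) :=
  let ⟨s, hs, hmono, hsign⟩ := hf
  ⟨s, hs, hmono.comp hg, fun x => hsign (g x)⟩

lemma pos_of_mul_self_le_mul_succ {a : ℕ → ℝ} (ha : ∀ k, a k * a k ≤ a k * a (k + 1))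
    {k m : ℕ} (hk : 0 < a k) (hkm : k ≤ m) : 0 < a m := by
  induction m, hkm using Nat.le_induction with
  | base => exact hk
  | succ m _ ih => nlinarith [ha m]

lemma monotone_of_mul_self_le_mul_succ {a : ℕ → ℝ} (ha : ∀ k, a k * a k ≤ a k * a (k + 1))
    (h0 : ∀ k, 0 ≤ a k) : Monotone a :=
  monotone_nat_of_le_succ fun k => by nlinarith [ha k, h0 k, h0 (k + 1)]

lemma signedMonotone_of_mul_self_le_mul_succ {a : ℕ → ℝ}
    (ha : ∀ k, a k * a k ≤ a k * a (k + 1)) : SignedMonotone a := by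
  have ha' : ∀ k, -a k * -a k ≤ -a k * -a (k + 1) := fun k => by linarith [ha k]
  by_cases h0 : ∀ k, 0 ≤ a k
  · exact ⟨1, by decide, by simpa using monotone_of_mul_self_le_mul_succ ha h0, by simpa using h0⟩
  · obtain ⟨k, hk⟩ := not_forall.1 h0
    have hneg : ∀ m, 0 ≤ -a m := fun m => by
      by_contra! hm
      have h1 := pos_of_mul_self_le_mul_succ ha (by linarith) (le_max_left m k)
      have h2 := pos_of_mul_self_le_mul_succ ha' (by linarith [not_le.1 hk]) (le_max_right m k)
      linarith
    exact ⟨-1, by decide, by simpa using monotone_of_mul_self_le_mul_succ ha' hneg,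
      by simpa using hneg⟩

lemma monotone_integral_of_nonneg {f : ℝ → ℝ} (hf : ∀ a b, IntervalIntegrable f volume a b)
    (h0 : ∀ t, 0 ≤ f t) (a : ℝ) : Monotone (fun t => ∫ u in a..t, f u) := fun s t hst =>
  sub_nonneg.1 <| (intervalIntegral.integral_interval_sub_left (hf a t) (hf a s)).symm ▸
    intervalIntegral.integral_nonneg hst fun u _ => h0 u

lemma SignedMonotone.monotone_or_antitone_integral {f : ℝ → ℝ} (hf : SignedMonotone f)
    (c a : ℝ) :
    Monotone (fun t => c + ∫ u in a..t, f u) ∨ Antitone (fun t => c + ∫ u in a..t, f u) := by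
  obtain ⟨s, hs, hmono, h0⟩ := hf
  have hint : ∀ a b, IntervalIntegrable (fun x => s * f x) volume a b :=
    fun _ _ => hmono.intervalIntegrable
  rcases s with _ | _ | _
  · exact absurd rfl hs
  · right
    have := monotone_integral_of_nonneg hint h0 a
    simp only [SignType.neg_eq_neg_one, SignType.coe_neg, SignType.coe_one, neg_mul, one_mul,
      intervalIntegral.integral_neg] at this
    simpa using this.neg.const_add c
  · left
    simp only [SignType.pos_eq_one, SignType.coe_one, one_mul] at hint h0
    exact (monotone_integral_of_nonneg hint h0 a).const_add c

lemma le_mul_exp_of_le_one_add_mul {u : ℕ → ℝ} {h A B : ℝ} (hh : 0 ≤ h) (hA : 0 ≤ A)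
    (hB : 0 ≤ B) (hu₀ : 0 ≤ u 0) (hu : ∀ k, u (k + 1) ≤ (1 + h * B) * u k + h * A) (k : ℕ) :
    u k ≤ (u 0 + A * (k * h)) * Real.exp (B * (k * h)) := by
  induction k with
  | zero => simp
  | succ k ih =>
    have hexp : 1 + h * B ≤ Real.exp (B * h) := by linarith [Real.add_one_le_exp (B * h)]
    have hpos : 0 ≤ (u 0 + A * (k * h)) * Real.exp (B * (k * h)) := by positivity
    have hsplit : Real.exp (B * ((k + 1 : ℕ) * h)) = Real.exp (B * (k * h)) * Real.exp (B * h) := by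
      rw [← Real.exp_add]; push_cast; ring_nf
    have hone : 1 ≤ Real.exp (B * (k * h)) * Real.exp (B * h) := one_le_mul_of_one_le_of_one_le
      (Real.one_le_exp (by positivity)) (Real.one_le_exp (by positivity))
    calc u (k + 1) ≤ (1 + h * B) * u k + h * A := hu k
      _ ≤ (1 + h * B) * ((u 0 + A * (k * h)) * Real.exp (B * (k * h))) + h * A := by
        gcongr
      _ ≤ Real.exp (B * h) * ((u 0 + A * (k * h)) * Real.exp (B * (k * h)))
          + h * A * (Real.exp (B * (k * h)) * Real.exp (B * h)) :=
        add_le_add (mul_le_mul_of_nonneg_right hexp hpos)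
          (le_mul_of_one_le_right (by positivity) hone)
      _ = (u 0 + A * ((k + 1 : ℕ) * h)) * Real.exp (B * ((k + 1 : ℕ) * h)) := by
        rw [hsplit]; push_cast; ring

lemma norm_le_of_euler {E : Type*} [NormedAddCommGroup E] [NormedSpace ℝ E] {P V : ℕ → E}
    {h A B : ℝ} (hh : 0 ≤ h) (hA : 0 ≤ A) (hB : 0 ≤ B) (hP : ∀ k, P (k + 1) = P k + h • V k)
    (hV : ∀ k, ‖V k‖ ≤ A + B * ‖P k‖) (k : ℕ) :
    ‖P k‖ ≤ (‖P 0‖ + A * (k * h)) * Real.exp (B * (k * h)) :=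
  le_mul_exp_of_le_one_add_mul (u := fun k => ‖P k‖) hh hA hB (norm_nonneg (P 0)) (fun k => by
    calc ‖P (k + 1)‖ ≤ ‖P k‖ + h * ‖V k‖ := by
          rw [hP]
          exact (norm_add_le _ _).trans_eq (by rw [norm_smul, Real.norm_of_nonneg hh])
      _ ≤ ‖P k‖ + h * (A + B * ‖P k‖) := by gcongr; exact hV k
      _ = (1 + h * B) * ‖P k‖ + h * A := by ring) k

def WeakComponentwiseMonotone {ι : Type*} (F : EuclideanSpace ℝ ι → Set (EuclideanSpace ℝ ι)) :
    Prop :=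
  ∀ x y, ∀ v ∈ F x, ∃ w ∈ F y, ∀ j, 0 ≤ (x j - y j) * (v j - w j)

theorem exists_euler_scheme {ι : Type*} {F : EuclideanSpace ℝ ι → Set (EuclideanSpace ℝ ι)}
    (hWCM : WeakComponentwiseMonotone F) {x₀ : EuclideanSpace ℝ ι} (hne : (F x₀).Nonempty)
    {h : ℝ} (hh : 0 < h) :
    ∃ P V : ℕ → EuclideanSpace ℝ ι, P 0 = x₀ ∧ (∀ k, P (k + 1) = P k + h • V k) ∧
      (∀ k, V k ∈ F (P k)) ∧ ∀ j, SignedMonotone (fun k => V k j) := by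
  let S := {p : EuclideanSpace ℝ ι × EuclideanSpace ℝ ι // p.2 ∈ F p.1}
  have hstep : ∀ p : S, ∃ q : S, q.1.1 = p.1.1 + h • p.1.2 ∧
      ∀ j, 0 ≤ (p.1.1 j - q.1.1 j) * (p.1.2 j - q.1.2 j) := fun p =>
    let ⟨w, hw, hsign⟩ := hWCM p.1.1 (p.1.1 + h • p.1.2) p.1.2 p.2
    ⟨⟨(_, w), hw⟩, rfl, hsign⟩
  choose step hstep_pos hstep_sign using hstep
  let s : ℕ → S := fun k => step^[k] ⟨(x₀, hne.some), hne.some_mem⟩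
  have hs : ∀ k, s (k + 1) = step (s k) := fun k => Function.iterate_succ_apply' _ _ _
  refine ⟨fun k => (s k).1.1, fun k => (s k).1.2, rfl, fun k => by simp only [hs, hstep_pos],
    fun k => (s k).2, fun j => signedMonotone_of_mul_self_le_mul_succ fun k => ?_⟩
  have hk := hstep_sign (s k) j
  rw [hstep_pos, PiLp.add_apply, PiLp.smul_apply, smul_eq_mul, ← hs] at hk
  simp only
  nlinarith

lemma intervalIntegrable_of_ae_norm_le {E : Type*} [NormedAddCommGroup E] {f : ℝ → E}
    {μ : Measure ℝ} [IsLocallyFiniteMeasure μ] (hf : AEStronglyMeasurable f μ) {M : ℝ}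
    (hb : ∀ᵐ t ∂μ, ‖f t‖ ≤ M) (a b : ℝ) : IntervalIntegrable f μ a b :=
  intervalIntegrable_const.mono_fun' hf.restrict (ae_restrict_of_ae hb)

noncomputable def eulerIndex (h : ℝ) (N : ℕ) (t : ℝ) : ℕ := min ⌊t / h⌋₊ N

section eulerIndex

variable {h : ℝ} {N : ℕ}

lemma eulerIndex_le (t : ℝ) : eulerIndex h N t ≤ N := min_le_right _ _

lemma eulerIndex_mono (hh : 0 ≤ h) : Monotone (eulerIndex h N) := fun _ _ hst =>
  min_le_min_right _ (Nat.floor_mono (div_le_div_of_nonneg_right hst hh))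

lemma eulerIndex_eq (hh : 0 < h) {k : ℕ} (hk : k ≤ N) {t : ℝ} (ht : t ∈ Ico (k * h) ((k + 1) * h)) :
    eulerIndex h N t = k := by
  have hfloor : ⌊t / h⌋₊ = k := by
    rw [Nat.floor_eq_iff (div_nonneg ((by positivity : (0 : ℝ) ≤ k * h).trans ht.1) hh.le),
      le_div_iff₀ hh, div_lt_iff₀ hh]
    exact ht
  rw [eulerIndex, hfloor, min_eq_left hk]

lemma abs_eulerIndex_mul_sub_le (hh : 0 < h) {t : ℝ} (ht : t ∈ Icc 0 ((N + 1) * h)) :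
    |eulerIndex h N t * h - t| ≤ h := by
  have hfloor_le : (⌊t / h⌋₊ : ℝ) * h ≤ t :=
    (le_div_iff₀ hh).1 (Nat.floor_le (div_nonneg ht.1 hh.le))
  have hlt_floor : t < (⌊t / h⌋₊ + 1) * h := (div_lt_iff₀ hh).1 (Nat.lt_floor_add_one _)
  rw [abs_le]
  rcases le_total ⌊t / h⌋₊ N with hle | hle
  · rw [eulerIndex, min_eq_left hle]
    constructor <;> nlinarith
  · rw [eulerIndex, min_eq_right hle]
    have : (N : ℝ) * h ≤ ⌊t / h⌋₊ * h := by gcongr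
    constructor <;> nlinarith [ht.2]

variable {E : Type*} [NormedAddCommGroup E]

lemma stronglyMeasurable_comp_eulerIndex (hh : 0 ≤ h) (V : ℕ → E) :
    StronglyMeasurable (fun t => V (eulerIndex h N t)) :=
  StronglyMeasurable.of_discrete.comp_measurable (eulerIndex_mono hh).measurable

lemma norm_comp_eulerIndex_le (V : ℕ → E) (t : ℝ) :
    ‖V (eulerIndex h N t)‖ ≤ ∑ k ∈ Finset.range (N + 1), ‖V k‖ :=
  Finset.single_le_sum (f := fun k => ‖V k‖) (fun _ _ => norm_nonneg _)
    (Finset.mem_range_succ_iff.2 (eulerIndex_le t))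

lemma intervalIntegrable_comp_eulerIndex (hh : 0 ≤ h) (V : ℕ → E) (a b : ℝ) :
    IntervalIntegrable (fun t => V (eulerIndex h N t)) volume a b :=
  intervalIntegrable_of_ae_norm_le (stronglyMeasurable_comp_eulerIndex hh V).aestronglyMeasurable
    (Eventually.of_forall (norm_comp_eulerIndex_le V)) a b

variable [NormedSpace ℝ E] [CompleteSpace E]

lemma integral_comp_eulerIndex_step (hh : 0 < h) (V : ℕ → E) {k : ℕ} (hk : k ≤ N) :
    ∫ t in k * h..(k + 1) * h, V (eulerIndex h N t) = h • V k := by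
  have hle : k * h ≤ (k + 1) * h := by nlinarith
  have hae : ∀ᵐ t, t ∈ uIoc (k * h) ((k + 1) * h) → V (eulerIndex h N t) = V k := by
    filter_upwards [measure_singleton ((k + 1) * h) |> measure_eq_zero_iff_ae_notMem.1]
      with t hne ht
    rw [uIoc_of_le hle] at ht
    rw [eulerIndex_eq hh hk ⟨ht.1.le, lt_of_le_of_ne ht.2 hne⟩]
  rw [intervalIntegral.integral_congr_ae hae, intervalIntegral.integral_const]
  congr 1
  ring

/-- The piecewise linear interpolation of an Euler scheme passes through its nodes. -/
lemma add_integral_comp_eulerIndex (hh : 0 < h) {P V : ℕ → E}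
    (hP : ∀ k, P (k + 1) = P k + h • V k) {k : ℕ} (hk : k ≤ N + 1) :
    P 0 + ∫ t in 0..k * h, V (eulerIndex h N t) = P k := by
  induction k with
  | zero => simp
  | succ k ih =>
    rw [← intervalIntegral.integral_add_adjacent_intervals
      (intervalIntegrable_comp_eulerIndex hh.le V _ _)
      (intervalIntegrable_comp_eulerIndex hh.le V _ _),
      ← add_assoc, ih (by omega), Nat.cast_succ, integral_comp_eulerIndex_step hh V (by omega), hP]

end eulerIndex

theorem exists_euler_velocities {ι : Type*} [Fintype ι]
    {F : EuclideanSpace ℝ ι → Set (EuclideanSpace ℝ ι)}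
    (hWCM : WeakComponentwiseMonotone F) {x₀ : EuclideanSpace ℝ ι} (hne : (F x₀).Nonempty)
    {A B : ℝ} (hgrowth : ∀ x, ∀ v ∈ F x, ‖v‖ ≤ A + B * ‖x‖) {T : ℝ} (hT : 0 < T) :
    ∃ M, ∀ N : ℕ, ∃ W : ℝ → EuclideanSpace ℝ ι, AEStronglyMeasurable W volume ∧
      (∀ t, ‖W t‖ ≤ M) ∧ (∀ j, SignedMonotone (fun t => W t j)) ∧
      ∀ t ∈ Icc 0 T, ∃ s, |s - t| ≤ T / (N + 1) ∧ W t ∈ F (x₀ + ∫ u in 0..s, W u) := by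
  refine ⟨|A| + |B| * ((‖x₀‖ + |A| * T) * Real.exp (|B| * T)), fun N => ?_⟩
  set h := T / (N + 1)
  have hh : 0 < h := by positivity
  have hNh : (N + 1) * h = T := by simp only [h]; field_simp
  obtain ⟨P, V, hP0, hP, hV, hVmono⟩ := exists_euler_scheme hWCM hne hh
  have hVP : ∀ k, ‖V k‖ ≤ |A| + |B| * ‖P k‖ := fun k => (hgrowth _ _ (hV k)).trans
    (add_le_add (le_abs_self A) (mul_le_mul_of_nonneg_right (le_abs_self B) (norm_nonneg _)))
  have hPC : ∀ k ≤ N, ‖P k‖ ≤ (‖x₀‖ + |A| * T) * Real.exp (|B| * T) := fun k hk => by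
    have hkh : k * h ≤ T := hNh ▸ mul_le_mul_of_nonneg_right (by norm_cast; omega) hh.le
    refine (norm_le_of_euler hh.le (abs_nonneg A) (abs_nonneg B) hP hVP k).trans ?_
    rw [hP0]
    gcongr
  refine ⟨fun t => V (eulerIndex h N t),
    (stronglyMeasurable_comp_eulerIndex hh.le V).aestronglyMeasurable,
    fun t => (hVP _).trans (by gcongr; exact hPC _ (eulerIndex_le t)),
    fun j => (hVmono j).comp_monotone (eulerIndex_mono hh.le),
    fun t ht => ⟨eulerIndex h N t * h, abs_eulerIndex_mul_sub_le hh (hNh ▸ ht), ?_⟩⟩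
  rw [← hP0, add_integral_comp_eulerIndex hh hP ((eulerIndex_le t).trans N.le_succ)]
  exact hV _

noncomputable def ratSupBelow (L : ℚ → ℝ) (t : ℝ) : ℝ := sSup (L '' {q : ℚ | (q : ℝ) < t})

section ratSupBelow

variable {L : ℚ → ℝ} {a b : ℝ}

lemma nonempty_image_rat_lt (L : ℚ → ℝ) (t : ℝ) : (L '' {q : ℚ | (q : ℝ) < t}).Nonempty :=
  let ⟨q, hq⟩ := exists_rat_lt t
  ⟨L q, q, hq, rfl⟩

lemma bddAbove_image_rat_lt (hL : ∀ q, L q ∈ Icc a b) (t : ℝ) :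
    BddAbove (L '' {q : ℚ | (q : ℝ) < t}) :=
  ⟨b, by rintro _ ⟨q, -, rfl⟩; exact (hL q).2⟩

lemma le_ratSupBelow (hL : ∀ q, L q ∈ Icc a b) {q : ℚ} {t : ℝ} (hq : (q : ℝ) < t) :
    L q ≤ ratSupBelow L t :=
  le_csSup (bddAbove_image_rat_lt hL t) ⟨q, hq, rfl⟩

lemma ratSupBelow_mem_Icc (hL : ∀ q, L q ∈ Icc a b) (t : ℝ) : ratSupBelow L t ∈ Icc a b := by
  obtain ⟨q, hq⟩ := exists_rat_lt t
  exact ⟨(hL q).1.trans (le_ratSupBelow hL hq),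
    csSup_le (nonempty_image_rat_lt L t) (by rintro _ ⟨q, -, rfl⟩; exact (hL q).2)⟩

lemma ratSupBelow_mono (hL : ∀ q, L q ∈ Icc a b) : Monotone (ratSupBelow L) := fun _ t hst =>
  csSup_le_csSup (bddAbove_image_rat_lt hL t) (nonempty_image_rat_lt L _)
    (image_mono fun _ hq => lt_of_lt_of_le hq hst)

theorem tendsto_ratSupBelow {f : ℕ → ℝ → ℝ} (hf : ∀ m, Monotone (f m))
    (hlim : ∀ q : ℚ, Tendsto (fun m => f m q) atTop (𝓝 (L q))) (hL : ∀ q, L q ∈ Icc a b)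
    {t : ℝ} (ht : ContinuousAt (ratSupBelow L) t) :
    Tendsto (fun m => f m t) atTop (𝓝 (ratSupBelow L t)) := by
  refine tendsto_order.2 ⟨fun c hc => ?_, fun c hc => ?_⟩
  · obtain ⟨_, ⟨q, hq, rfl⟩, hcq⟩ := exists_lt_of_lt_csSup (nonempty_image_rat_lt L t) hc
    filter_upwards [(tendsto_order.1 (hlim q)).1 c hcq] with m hm
    exact hm.trans_le (hf m hq.le)
  · obtain ⟨t', hct', htt'⟩ := (((ht.eventually (gt_mem_nhds hc)).filter_mono
      nhdsWithin_le_nhds).and (self_mem_nhdsWithin (s := Ioi t))).exists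
    obtain ⟨r, htr, hrt'⟩ := exists_rat_btwn htt'
    filter_upwards [(tendsto_order.1 (hlim r)).2 c ((le_ratSupBelow hL hrt').trans_lt hct')]
      with m hm
    exact (hf m htr.le).trans_lt hm

end ratSupBelow

/-- Helly's selection theorem. -/
theorem exists_subseq_tendsto_of_monotone {ι : Type*} [Countable ι] {f : ℕ → ι → ℝ → ℝ}
    {a b : ℝ} (hf : ∀ m i, Monotone (f m i)) (hab : ∀ m i t, f m i t ∈ Icc a b) :
    ∃ φ : ℕ → ℕ, StrictMono φ ∧ ∃ g : ι → ℝ → ℝ, (∀ i, Monotone (g i)) ∧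
      (∀ i t, g i t ∈ Icc a b) ∧
      ∀ i t, ContinuousAt (g i) t → Tendsto (fun m => f (φ m) i t) atTop (𝓝 (g i t)) := by
  obtain ⟨L, hL, φ, hφ, hlim⟩ := (isCompact_univ_pi fun _ : ι × ℚ => isCompact_Icc).tendsto_subseq
    (x := fun m p => f m p.1 p.2) fun m => mem_univ_pi.2 fun p => hab m p.1 p.2
  have hL' : ∀ i q, L (i, q) ∈ Icc a b := fun i q => mem_univ_pi.1 hL (i, q)
  exact ⟨φ, hφ, fun i => ratSupBelow fun q => L (i, q), fun i => ratSupBelow_mono (hL' i),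
    fun i => ratSupBelow_mem_Icc (hL' i), fun i t ht =>
      tendsto_ratSupBelow (fun m => hf (φ m) i) (fun q => tendsto_pi_nhds.1 hlim (i, q)) (hL' i) ht⟩

lemma SignType.coe_mul_self_of_ne_zero {s : SignType} (hs : s ≠ 0) : (s : ℝ) * s = 1 := by
  rcases s with _ | _ | _ <;> simp_all

theorem exists_subseq_tendsto_ae_of_signedMonotone {ι : Type*} [Fintype ι]
    {W : ℕ → ℝ → EuclideanSpace ℝ ι} {M : ℝ} (hWb : ∀ m t, ‖W m t‖ ≤ M)
    (hW : ∀ m j, SignedMonotone (fun t => W m t j)) :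
    ∃ φ : ℕ → ℕ, StrictMono φ ∧ ∃ g : ℝ → EuclideanSpace ℝ ι,
      (∀ j, SignedMonotone (fun t => g t j)) ∧
      ∀ᵐ t, Tendsto (fun m => W (φ m) t) atTop (𝓝 (g t)) := by
  choose s hs0 hsmono hsnonneg using hW
  obtain ⟨σ, hσ⟩ := frequently_exists.1
    (Frequently.of_forall (f := atTop) (p := fun m => ∃ σ, s m = σ) fun m => ⟨s m, rfl⟩)
  obtain ⟨ψ, hψ, hψσ⟩ := extraction_of_frequently_atTop hσ
  have hσσ : ∀ j, (σ j : ℝ) * σ j = 1 := fun j => SignType.coe_mul_self_of_ne_zero (hψσ 0 ▸ hs0 _ j)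
  have hmem : ∀ m j t, σ j * W (ψ m) t j ∈ Icc 0 M := fun m j t => by
    refine ⟨hψσ m ▸ hsnonneg _ j t, ?_⟩
    have hx := (PiLp.norm_apply_le (W (ψ m) t) j).trans (hWb (ψ m) t)
    rw [Real.norm_eq_abs, abs_le] at hx
    rcases mul_self_eq_one_iff.1 (hσσ j) with h | h <;> rw [h] <;> linarith
  obtain ⟨φ, hφ, G, hGmono, hGmem, hGlim⟩ := exists_subseq_tendsto_of_monotone
    (fun m j => hψσ m ▸ hsmono (ψ m) j) hmem
  have hG : ∀ j t, (σ j : ℝ) * (σ j * G j t) = G j t := fun j t => by rw [← mul_assoc, hσσ, one_mul]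
  refine ⟨ψ ∘ φ, hψ.comp hφ, fun t => WithLp.toLp 2 fun j => σ j * G j t,
    fun j => ⟨σ j, fun h => by simpa [h] using hσσ j, by simpa [hG] using hGmono j,
      by simpa [hG] using fun t => (hGmem j t).1⟩, ?_⟩
  have hD : (⋃ j, {t | ¬ContinuousAt (G j) t}).Countable :=
    countable_iUnion fun j => (hGmono j).countable_not_continuousAt
  filter_upwards [hD.ae_notMem volume] with t ht
  simp only [mem_iUnion, mem_ofPred_eq, not_exists, not_not] at ht
  refine ((PiLp.continuous_toLp 2 _).tendsto _).comp (tendsto_pi_nhds.2 fun j => ?_)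
  simpa [← mul_assoc, hσσ] using ((hGlim j t (ht j)).const_mul (σ j : ℝ))

lemma tendsto_apply_of_lipschitzWith {α β : Type*} [PseudoMetricSpace α] [PseudoMetricSpace β]
    {X : ℕ → α → β} {K : NNReal} (hX : ∀ m, LipschitzWith K (X m)) {t : α} {y : β}
    (hXt : Tendsto (fun m => X m t) atTop (𝓝 y)) {s : ℕ → α} (hs : Tendsto s atTop (𝓝 t)) :
    Tendsto (fun m => X m (s m)) atTop (𝓝 y) := by
  rw [tendsto_iff_dist_tendsto_zero] at hXt hs ⊢
  refine squeeze_zero (fun _ => dist_nonneg) (fun m => dist_triangle _ (X m t) _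
    |>.trans (add_le_add_left ((hX m).dist_le_mul _ _) _)) ?_
  simpa using (hs.const_mul (K : ℝ)).add hXt

section primitive

variable {E : Type*} [NormedAddCommGroup E] [NormedSpace ℝ E]

lemma lipschitzWith_add_integral {f : ℝ → E} (hf : AEStronglyMeasurable f volume) {M : ℝ}
    (hb : ∀ᵐ t, ‖f t‖ ≤ M) (c : E) (a : ℝ) :
    LipschitzWith M.toNNReal (fun t => c + ∫ u in a..t, f u) :=
  LipschitzWith.of_dist_le' fun s t => by
    rw [dist_add_left, dist_eq_norm, intervalIntegral.integral_interval_sub_left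
      (intervalIntegrable_of_ae_norm_le hf hb _ _) (intervalIntegrable_of_ae_norm_le hf hb _ _),
      Real.dist_eq]
    exact intervalIntegral.norm_integral_le_of_norm_le_const_ae (hb.mono fun _ h _ => h)

theorem mem_of_tendsto_of_isClosed [CompleteSpace E] {F : E → Set E}
    (hgraph : IsClosed {p : E × E | p.2 ∈ F p.1}) {x₀ : E} {M : ℝ} {W : ℕ → ℝ → E}
    {g : ℝ → E} {δ : ℕ → ℝ} (hWm : ∀ m, AEStronglyMeasurable (W m) volume)
    (hWb : ∀ m t, ‖W m t‖ ≤ M) (hδ : Tendsto δ atTop (𝓝 0))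
    (hlim : ∀ᵐ t, Tendsto (fun m => W m t) atTop (𝓝 (g t))) {t : ℝ}
    (hWF : ∀ m, ∃ s, |s - t| ≤ δ m ∧ W m t ∈ F (x₀ + ∫ u in 0..s, W m u))
    (ht : Tendsto (fun m => W m t) atTop (𝓝 (g t))) :
    g t ∈ F (x₀ + ∫ u in 0..t, g u) := by
  choose s hs hWs using hWF
  have hst : Tendsto s atTop (𝓝 t) := by
    rw [tendsto_iff_dist_tendsto_zero]
    exact squeeze_zero (fun _ => dist_nonneg) (fun m => (Real.dist_eq _ _).trans_le (hs m)) hδ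
  have hXt : Tendsto (fun m => x₀ + ∫ u in 0..t, W m u) atTop (𝓝 (x₀ + ∫ u in 0..t, g u)) :=
    (intervalIntegral.tendsto_integral_filter_of_dominated_convergence (fun _ => M)
      (Eventually.of_forall fun m => (hWm m).restrict)
      (Eventually.of_forall fun m => Eventually.of_forall fun u _ => hWb m u)
      intervalIntegrable_const (hlim.mono fun _ h _ => h)).const_add x₀
  have hXs := tendsto_apply_of_lipschitzWith
    (fun m => lipschitzWith_add_integral (hWm m) (Eventually.of_forall (hWb m)) x₀ 0) hXt hst
  exact hgraph.mem_of_tendsto (hXs.prodMk_nhds ht) (Eventually.of_forall hWs)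

end primitive

open MeasureTheory in
theorem existence_wcm_nonconvex_general
    (n : ℕ) (F : EuclideanSpace ℝ (Fin n) → Set (EuclideanSpace ℝ (Fin n)))
    (hne : ∀ x, (F x).Nonempty)
    (hgraph : IsClosed {p : EuclideanSpace ℝ (Fin n) × EuclideanSpace ℝ (Fin n) | p.2 ∈ F p.1})
    (A B : ℝ) (hgrowth : ∀ x, ∀ v ∈ F x, ‖v‖ ≤ A + B * ‖x‖)
    (x₀ : EuclideanSpace ℝ (Fin n)) (T : ℝ) (hT : 0 < T)
    (hWCM : ∀ x y, ∀ v ∈ F x, ∃ w ∈ F y, ∀ j : Fin n, 0 ≤ (x j - y j) * (v j - w j)) :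
    ∃ (K : NNReal) (x : ℝ → EuclideanSpace ℝ (Fin n))
      (x' : ℝ → EuclideanSpace ℝ (Fin n)),
      LipschitzOnWith K x (Set.Icc 0 T) ∧ x 0 = x₀ ∧
      (∀ᵐ t ∂(volume.restrict (Set.Icc (0:ℝ) T)),
        HasDerivAt x (x' t) t ∧ x' t ∈ F (x t)) ∧
      (∀ j : Fin n, MonotoneOn (fun t => x t j) (Set.Icc 0 T) ∨
        AntitoneOn (fun t => x t j) (Set.Icc 0 T)) := by
  obtain ⟨M, hW⟩ := exists_euler_velocities hWCM (hne x₀) hgrowth hT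
  choose W hWm hWb hWmono hWF using hW
  obtain ⟨φ, hφ, g, hgmono, hlim⟩ := exists_subseq_tendsto_ae_of_signedMonotone hWb hWmono
  have hgm : AEStronglyMeasurable g volume :=
    aestronglyMeasurable_of_tendsto_ae _ (fun m => hWm (φ m)) hlim
  have hgb : ∀ᵐ t, ‖g t‖ ≤ M := hlim.mono fun t ht => le_of_tendsto' ht.norm fun m => hWb _ t
  have hδ : Tendsto (fun N : ℕ => T / ((N : ℝ) + 1)) atTop (𝓝 0) :=
    tendsto_const_nhds.div_atTop (tendsto_atTop_add_const_right _ 1 tendsto_natCast_atTop_atTop)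
  have hgi : LocallyIntegrable g volume := (memLp_top_of_bound hgm M hgb).locallyIntegrable le_top
  refine ⟨M.toNNReal, fun t => x₀ + ∫ u in 0..t, g u, g,
    (lipschitzWith_add_integral hgm hgb x₀ 0).lipschitzOnWith, by simp, ?_, fun j => ?_⟩
  · filter_upwards [ae_restrict_mem measurableSet_Icc, ae_restrict_of_ae hlim,
      ae_restrict_of_ae (LocallyIntegrable.ae_hasDerivAt_integral hgi)] with t ht htlim hder
    exact ⟨(hder 0).const_add x₀, mem_of_tendsto_of_isClosed hgraph (fun m => hWm (φ m))
      (fun m => hWb (φ m)) (hδ.comp hφ.tendsto_atTop) hlim (fun m => hWF (φ m) t ht) htlim⟩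
  · have hcoord : ∀ t, (x₀ + ∫ u in 0..t, g u) j = x₀ j + ∫ u in 0..t, g u j := fun t => by
      simpa using ((EuclideanSpace.proj (𝕜 := ℝ) j).intervalIntegral_comp_comm
        (intervalIntegrable_of_ae_norm_le hgm hgb 0 t)).symm
    simp only [hcoord]
    exact ((hgmono j).monotone_or_antitone_integral (x₀ j) 0).imp (·.monotoneOn _)
      (·.antitoneOn _)

open MeasureTheory in
theorem existence_wcm_nonconvex
    (n : ℕ) (F : EuclideanSpace ℝ (Fin n) → Set (EuclideanSpace ℝ (Fin n)))
    (hne : ∀ x, (F x).Nonempty) (hcpt : ∀ x, IsCompact (F x))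
    (hgraph : IsClosed {p : EuclideanSpace ℝ (Fin n) × EuclideanSpace ℝ (Fin n) | p.2 ∈ F p.1})
    (A B : ℝ) (hgrowth : ∀ x, ∀ v ∈ F x, ‖v‖ ≤ A + B * ‖x‖)
    (x₀ : EuclideanSpace ℝ (Fin n)) (T : ℝ) (hT : 0 < T)
    (hWCM : ∀ x y, ∀ v ∈ F x, ∃ w ∈ F y, ∀ j : Fin n, 0 ≤ (x j - y j) * (v j - w j)) :
    ∃ (K : NNReal) (x : ℝ → EuclideanSpace ℝ (Fin n))
      (x' : ℝ → EuclideanSpace ℝ (Fin n)),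
      LipschitzOnWith K x (Set.Icc 0 T) ∧ x 0 = x₀ ∧
      (∀ᵐ t ∂(volume.restrict (Set.Icc (0:ℝ) T)),
        HasDerivAt x (x' t) t ∧ x' t ∈ F (x t)) ∧
      (∀ j : Fin n, MonotoneOn (fun t => x t j) (Set.Icc 0 T) ∨
        AntitoneOn (fun t => x t j) (Set.Icc 0 T)) :=
  existence_wcm_nonconvex_general n F hne hgraph A B hgrowth x₀ T hT hWCM
end
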